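/- Let (X, Y) be a random input-label pair where X takes values in ℝ^{2d+1} and Y in {-1,1}, distributed as follows: Y is uniform; X_0 | Y=y equals y with probability p and -y with probability 1-p; for 1 ≤ t ≤ d, X_{2t-1} | Y=y ~ N(3y/√d, 1) and X_{2t} | Y=y ~ N(-3y/√d, 1), all coordinates conditionally independent. Let A(x) be defined for inputs with true label y by (A(x))_0 = 0, (A(x))_{2t-1} = -6y/√d, (A(x))_{2t} = 6y/√d. Let r(x) be the random transformation that with probability 1/2 leaves x unchanged and with probability 1/2 swaps each odd-even coordinate pair (x_{2t-1}, x_{2t}). Then for any classifier f : ℝ^{2d+1} → {-1,1}: P(f(r(X)) = Y) = (1/2)·P(f(X) = Y) + (1/2)·P(f(X + A(X)) = Y). -/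

import Mathlib

open MeasureTheory ProbabilityTheory ENNReal

/-- Law of X₀ given Y = y: equals y with probability p and -y with probability 1-p. -/
noncomputable def bern (p : ℝ) (y : ℝ) : MeasureTheory.Measure ℝ :=
  ENNReal.ofReal p • MeasureTheory.Measure.dirac y +
    ENNReal.ofReal (1 - p) • MeasureTheory.Measure.dirac (-y)

/-- Conditional law of X = (X₀, X₁, …, X_{2d}) given Y = y. -/
noncomputable def condLaw (d : ℕ) (p : ℝ) (y : ℝ) :
    MeasureTheory.Measure (Fin (2 * d + 1) → ℝ) :=
  MeasureTheory.Measure.pi (fun i =>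
    if i.val = 0 then bern p y
    else if i.val % 2 = 1 then ProbabilityTheory.gaussianReal (3 * y / Real.sqrt d) 1
    else ProbabilityTheory.gaussianReal (-3 * y / Real.sqrt d) 1)

/-- Joint law of (X, Y), with Y uniform on {-1, 1}. -/
noncomputable def jointLaw (d : ℕ) (p : ℝ) :
    MeasureTheory.Measure ((Fin (2 * d + 1) → ℝ) × ℝ) :=
  (2⁻¹ : ℝ≥0∞) • (condLaw d p 1).map (fun x => (x, (1 : ℝ))) +
    (2⁻¹ : ℝ≥0∞) • (condLaw d p (-1)).map (fun x => (x, (-1 : ℝ)))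

/-- The adversarial perturbation A(x) (depending only on the true label y). -/
noncomputable def pert (d : ℕ) (y : ℝ) : Fin (2 * d + 1) → ℝ := fun i =>
  if i.val = 0 then 0
  else if i.val % 2 = 1 then -6 * y / Real.sqrt d
  else 6 * y / Real.sqrt d

/-- The index permutation fixing 0 and swapping each pair (2t-1, 2t). -/
def swapIdx (d : ℕ) (i : Fin (2 * d + 1)) : Fin (2 * d + 1) :=
  if h0 : i.val = 0 then i
  else if h1 : i.val % 2 = 1 then ⟨i.val + 1, by have := i.isLt; omega⟩
  else ⟨i.val - 1, by have := i.isLt; omega⟩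

/-- The coordinate-pair swap on ℝ^{2d+1}. -/
def swapMap (d : ℕ) (x : Fin (2 * d + 1) → ℝ) : Fin (2 * d + 1) → ℝ :=
  fun i => x (swapIdx d i)

/-- Law of (X + A(X), Y). -/
noncomputable def advLaw (d : ℕ) (p : ℝ) :
    MeasureTheory.Measure ((Fin (2 * d + 1) → ℝ) × ℝ) :=
  (jointLaw d p).map (fun q => (q.1 + pert d q.2, q.2))

/-- Law of (r(X), Y): with prob 1/2 identity, with prob 1/2 the pair swap. -/
noncomputable def rLaw (d : ℕ) (p : ℝ) :
    MeasureTheory.Measure ((Fin (2 * d + 1) → ℝ) × ℝ) :=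
  (2⁻¹ : ℝ≥0∞) • jointLaw d p +
    (2⁻¹ : ℝ≥0∞) • (jointLaw d p).map (fun q => (swapMap d q.1, q.2))

/-!
Conditionally on `Y = y` the coordinates of `X` are independent, so both `swapMap d X` and
`X + pert d y` are again product measures, and they have the same factors: swapping the
independent pair `N(3y/√d, 1)`, `N(-3y/√d, 1)` gives the same law as shifting its two
members by `∓6y/√d`. Hence `(swapMap d X, Y)` and `(X + pert d Y, Y)` have the same joint law.
-/

theorem MeasureTheory.Measure.pi_map_comp_perm {ι α : Type*} [Fintype ι] [MeasurableSpace α]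
    (μ : ι → Measure α) [∀ i, SigmaFinite (μ i)] (σ : Equiv.Perm ι) :
    (Measure.pi μ).map (fun x => x ∘ σ) = Measure.pi fun i => μ (σ i) :=
  (measurePreserving_arrowCongr' μ (fun i => μ (σ i)) σ.symm (MeasurableEquiv.refl α)
    fun i => by simp only [Equiv.apply_symm_apply]; exact MeasurePreserving.id (μ i)).map_eq

theorem MeasureTheory.Measure.map_prodMk_right_congr {α β : Type*} [MeasurableSpace α]
    [MeasurableSpace β] {μ : Measure α} {g h : α → α} (hg : Measurable g) (hh : Measurable h)
    (hgh : μ.map g = μ.map h) (b : β) :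
    μ.map (fun x => (g x, b)) = μ.map (fun x => (h x, b)) :=
  calc μ.map (fun x => (g x, b)) = (μ.map g).map (·, b) := (map_map measurable_prodMk_right hg).symm
    _ = (μ.map h).map (·, b) := by rw [hgh]
    _ = μ.map (fun x => (h x, b)) := map_map measurable_prodMk_right hh

instance bern.instIsFiniteMeasure (p y : ℝ) : IsFiniteMeasure (bern p y) := by
  constructor
  simp [bern, ofReal_lt_top]

noncomputable def condMarginal (d : ℕ) (p y : ℝ) (i : Fin (2 * d + 1)) : Measure ℝ :=
  if i.val = 0 then bern p y
  else if i.val % 2 = 1 then gaussianReal (3 * y / Real.sqrt d) 1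
  else gaussianReal (-3 * y / Real.sqrt d) 1

instance condMarginal.instIsFiniteMeasure (d : ℕ) (p y : ℝ) (i : Fin (2 * d + 1)) :
    IsFiniteMeasure (condMarginal d p y i) := by
  unfold condMarginal; split_ifs <;> infer_instance

theorem condLaw_eq_pi (d : ℕ) (p y : ℝ) : condLaw d p y = Measure.pi (condMarginal d p y) := rfl

theorem swapIdx_val (d : ℕ) (i : Fin (2 * d + 1)) :
    (swapIdx d i).val = if i.val = 0 then i.val
      else if i.val % 2 = 1 then i.val + 1 else i.val - 1 := by
  unfold swapIdx; split_ifs <;> rfl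

theorem swapIdx_involutive (d : ℕ) : Function.Involutive (swapIdx d) := fun i => by
  have := i.isLt
  ext
  rw [swapIdx_val, swapIdx_val]
  split_ifs <;> first | omega | simp_all

theorem measurable_swapMap (d : ℕ) : Measurable (swapMap d) :=
  measurable_pi_lambda _ fun _ => measurable_pi_apply _

theorem continuous_pert (d : ℕ) : Continuous (pert d) :=
  continuous_pi fun _ => by unfold pert; split_ifs <;> fun_prop

theorem condMarginal_swapIdx (d : ℕ) (p y : ℝ) (i : Fin (2 * d + 1)) :
    condMarginal d p y (swapIdx d i) = (condMarginal d p y i).map (· + pert d y i) := by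
  have hval := swapIdx_val d i
  unfold condMarginal pert
  split_ifs at hval ⊢ <;> first
    | omega
    | (rw [gaussianReal_map_add_const]; congr 1; ring)
    | simp

theorem condLaw_map_swapMap (d : ℕ) (p y : ℝ) :
    (condLaw d p y).map (swapMap d) = (condLaw d p y).map (· + pert d y) := by
  rw [condLaw_eq_pi]
  calc (Measure.pi (condMarginal d p y)).map (swapMap d)
      = Measure.pi fun i => condMarginal d p y (swapIdx d i) :=
        Measure.pi_map_comp_perm _ (swapIdx_involutive d).toPerm
    _ = Measure.pi fun i => (condMarginal d p y i).map (· + pert d y i) := by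
        simp only [condMarginal_swapIdx]
    _ = (Measure.pi (condMarginal d p y)).map (· + pert d y) :=
        (Measure.pi_map_pi fun i => (measurable_add_const _).aemeasurable).symm

theorem jointLaw_map_swapMap (d : ℕ) (p : ℝ) :
    (jointLaw d p).map (fun q => (swapMap d q.1, q.2)) = advLaw d p := by
  have hswap : Measurable fun q : (Fin (2 * d + 1) → ℝ) × ℝ => (swapMap d q.1, q.2) :=
    ((measurable_swapMap d).comp measurable_fst).prodMk measurable_snd
  have hadv : Measurable fun q : (Fin (2 * d + 1) → ℝ) × ℝ => (q.1 + pert d q.2, q.2) :=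
    (measurable_fst.add ((continuous_pert d).measurable.comp measurable_snd)).prodMk
      measurable_snd
  have hcond (y : ℝ) := Measure.map_prodMk_right_congr (measurable_swapMap d)
    (measurable_add_const (pert d y)) (condLaw_map_swapMap d p y) y
  unfold advLaw jointLaw
  simp only [Measure.map_add _ _ hswap, Measure.map_add _ _ hadv, Measure.map_smul,
    Measure.map_map hswap measurable_prodMk_right, Measure.map_map hadv measurable_prodMk_right]
  exact congrArg₂ (· + ·) (congrArg _ (hcond 1)) (congrArg _ (hcond (-1)))

theorem rLaw_eq (d : ℕ) (p : ℝ) :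
    rLaw d p = (2⁻¹ : ℝ≥0∞) • jointLaw d p + (2⁻¹ : ℝ≥0∞) • advLaw d p := by
  rw [rLaw, jointLaw_map_swapMap]

theorem rotation_accuracy_split_general (d : ℕ) (p : ℝ)
    (f : (Fin (2 * d + 1) → ℝ) → ℝ) :
    rLaw d p {q | f q.1 = q.2} =
      2⁻¹ * jointLaw d p {q | f q.1 = q.2} + 2⁻¹ * advLaw d p {q | f q.1 = q.2} := by
  rw [rLaw_eq]
  rfl

/-- P(f(r(X)) = Y) = ½·P(f(X) = Y) + ½·P(f(X + A(X)) = Y) for any classifier f. -/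
theorem rotation_accuracy_split (d : ℕ) (hd : 1 ≤ d) (p : ℝ)
    (hp0 : 1/2 ≤ p) (hp1 : p ≤ 1)
    (f : (Fin (2 * d + 1) → ℝ) → ℝ) (hf : Measurable f)
    (hfval : ∀ x, f x = 1 ∨ f x = -1) :
    rLaw d p {q | f q.1 = q.2} =
      2⁻¹ * jointLaw d p {q | f q.1 = q.2} + 2⁻¹ * advLaw d p {q | f q.1 = q.2} :=
  rotation_accuracy_split_general d p f
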